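/- Let A be a unique factorization domain containing ℚ, let B, F be nonzero locally nilpotent derivations of A with F irreducible, and let f ∈ ker F, f ≠ 0. If the derivations f·F and B commute (i.e. [fF, B] = 0), then B(f) = 0 and [F, B] = 0. -/

import Mathlib

/-- Local nilpotency of a map. -/
def IsLND {A : Type*} [Zero A] (D : A → A) : Prop := ∀ a : A, ∃ n : ℕ, D^[n] a = 0

/-- A locally nilpotent derivation `F` is irreducible if `F ≠ 0` and whenever
`F = g • F'` with `F'` locally nilpotent and `g ∈ ker F'`, `g` is a unit. -/
def IsIrreducibleLND {A : Type*} [CommRing A] [Algebra ℚ A] (F : Derivation ℚ A A) : Prop :=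
  F ≠ 0 ∧ IsLND ⇑F ∧
    ∀ (g : A) (F' : Derivation ℚ A A), IsLND ⇑F' → F' g = 0 → F = g • F' → IsUnit g

/-!
Writing out `[f F, B] = 0` gives `f [F, B] = B(f) F`, so `f` divides `B(f) F(a)` for every `a`.
A prime factor `p` of `f` lies in `ker F` (kernels of locally nilpotent derivations are
factorially closed), so if `p` divided every `F(a)` then `F = p (F / p)` would contradict the
irreducibility of `F`; hence `p ∣ B(f)`, and by induction `f ∣ B(f)`. For a locally nilpotent `B`
this forces `B(f) = 0`, since the `B`-degree is additive on products while `B` lowers it.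
Then `f [F, B] = 0`, so `[F, B] = 0`.
-/

open Finset

theorem IsLND.exists_iterate_ne_zero_iterate_succ_eq_zero {A : Type*} [Zero A] {D : A → A}
    (hD : IsLND D) {x : A} (hx : x ≠ 0) : ∃ m, D^[m] x ≠ 0 ∧ D^[m + 1] x = 0 := by
  classical
  have hN : Nat.find (hD x) ≠ 0 := fun h ↦ hx (by simpa [h] using Nat.find_spec (hD x))
  exact ⟨Nat.find (hD x) - 1, Nat.find_min (hD x) (by omega),
    by rw [Nat.sub_add_cancel (Nat.pos_of_ne_zero hN)]; exact Nat.find_spec (hD x)⟩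

namespace Derivation

section Iterate

variable {R A : Type*} [CommSemiring R] [CommSemiring A] [Algebra R A] (D : Derivation R A A)

theorem iterate_map_mul (n : ℕ) (p q : A) :
    D^[n] (p * q) = ∑ i ∈ range (n + 1), n.choose i • (D^[i] p * D^[n - i] q) := by
  induction n with
  | zero => simp
  | succ n ih =>
    rw [sum_choose_succ_nsmul (fun i j ↦ D^[i] p * D^[j] q), Function.iterate_succ_apply', ih,
      map_sum, ← sum_add_distrib]
    refine sum_congr rfl fun i hi ↦ ?_
    rw [map_nsmul, leibniz, ← nsmul_add, smul_eq_mul, smul_eq_mul,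
      ← Function.iterate_succ_apply' D, ← Function.iterate_succ_apply' D,
      Nat.succ_sub (Nat.lt_succ_iff.mp (mem_range.mp hi)), mul_comm (D^[n - i] q)]

theorem iterate_eq_zero_of_le {x : A} {m k : ℕ} (hm : D^[m] x = 0) (hk : m ≤ k) :
    D^[k] x = 0 := by
  obtain ⟨t, rfl⟩ := Nat.exists_eq_add_of_le hk
  rw [add_comm, Function.iterate_add_apply, hm, Function.iterate_fixed (map_zero D)]

theorem iterate_map_mul_of_iterate_succ_eq_zero {x y : A} {m n : ℕ}
    (hx : D^[m + 1] x = 0) (hy : D^[n + 1] y = 0) :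
    D^[m + n] (x * y) = (m + n).choose m • (D^[m] x * D^[n] y) := by
  rw [iterate_map_mul, sum_eq_single_of_mem m (mem_range.mpr (by omega)), Nat.add_sub_cancel_left]
  intro i _ him
  rcases lt_or_gt_of_ne him with h | h
  · rw [D.iterate_eq_zero_of_le hy (by omega), mul_zero, smul_zero]
  · rw [D.iterate_eq_zero_of_le hx h, zero_mul, smul_zero]

theorem iterate_smul_apply {p : A} (hp : D p = 0) (n : ℕ) (a : A) :
    (p • D)^[n] a = p ^ n * D^[n] a := by
  induction n with
  | zero => simp
  | succ n ih =>
    rw [Function.iterate_succ_apply', Function.iterate_succ_apply', ih, smul_apply, leibniz,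
      leibniz_pow, hp, smul_zero, smul_zero, smul_zero, add_zero, smul_eq_mul, smul_eq_mul,
      pow_succ', mul_assoc]

end Iterate

section Domain

variable {R A : Type*} [CommSemiring R] [CommRing A] [IsDomain A] [Algebra R A]
  {D : Derivation R A A}

theorem iterate_map_mul_ne_zero [CharZero A] {x y : A} {m n : ℕ}
    (hx : D^[m + 1] x = 0) (hx' : D^[m] x ≠ 0) (hy : D^[n + 1] y = 0) (hy' : D^[n] y ≠ 0) :
    D^[m + n] (x * y) ≠ 0 := by
  rw [D.iterate_map_mul_of_iterate_succ_eq_zero hx hy]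
  exact smul_ne_zero (Nat.choose_pos (Nat.le_add_right m n)).ne' (mul_ne_zero hx' hy')

theorem _root_.IsLND.map_eq_zero_of_map_mul_eq_zero [CharZero A] (hD : IsLND ⇑D) {x y : A}
    (hx : x ≠ 0) (hy : y ≠ 0) (hxy : D (x * y) = 0) : D x = 0 := by
  obtain ⟨m, hm', hm⟩ := hD.exists_iterate_ne_zero_iterate_succ_eq_zero hx
  obtain ⟨n, hn', hn⟩ := hD.exists_iterate_ne_zero_iterate_succ_eq_zero hy
  rcases Nat.eq_zero_or_pos m with rfl | hm0
  · exact hm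
  · exact absurd (D.iterate_eq_zero_of_le (m := 1) hxy (by omega))
      (iterate_map_mul_ne_zero hm hm' hn hn')

theorem _root_.IsLND.map_eq_zero_of_dvd [CharZero A] (hD : IsLND ⇑D) {x : A} (h : x ∣ D x) :
    D x = 0 := by
  obtain ⟨c, hc⟩ := h
  by_contra hne
  have hx : x ≠ 0 := by rintro rfl; exact hne D.map_zero
  have hc0 : c ≠ 0 := by rintro rfl; exact hne (hc.trans (mul_zero x))
  obtain ⟨m, hm', hm⟩ := hD.exists_iterate_ne_zero_iterate_succ_eq_zero hx
  obtain ⟨k, hk', hk⟩ := hD.exists_iterate_ne_zero_iterate_succ_eq_zero hc0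
  apply iterate_map_mul_ne_zero hm hm' hk hk'
  rw [← hc, ← Function.iterate_succ_apply]
  exact D.iterate_eq_zero_of_le hm (by omega)

noncomputable def divOfDvd (D : Derivation R A A) {p : A} (hp : p ≠ 0) (hd : ∀ a, p ∣ D a) :
    Derivation R A A where
  toFun a := (hd a).choose
  map_add' a b := mul_left_cancel₀ hp <| by
    rw [mul_add, ← (hd _).choose_spec, ← (hd _).choose_spec, ← (hd _).choose_spec, map_add]
  map_smul' r a := mul_left_cancel₀ hp <| by
    rw [RingHom.id_apply, mul_smul_comm, ← (hd _).choose_spec, ← (hd _).choose_spec, map_smul]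
  map_one_eq_zero' := mul_left_cancel₀ hp <| by
    change p * (hd 1).choose = p * 0
    rw [mul_zero, ← (hd _).choose_spec, map_one_eq_zero]
  leibniz' a b := mul_left_cancel₀ hp <| by
    change p * (hd (a * b)).choose = p * (a • (hd b).choose + b • (hd a).choose)
    rw [smul_eq_mul, smul_eq_mul, mul_add, mul_left_comm, mul_left_comm p b,
      ← (hd _).choose_spec, ← (hd _).choose_spec, ← (hd _).choose_spec, leibniz, smul_eq_mul,
      smul_eq_mul]

theorem smul_divOfDvd {p : A} (hp : p ≠ 0) (hd : ∀ a, p ∣ D a) : p • D.divOfDvd hp hd = D :=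
  ext fun a ↦ ((hd a).choose_spec).symm

end Domain

end Derivation

namespace IsIrreducibleLND

variable {A : Type*} [CommRing A] [IsDomain A] [Algebra ℚ A] {F : Derivation ℚ A A}

theorem isUnit_of_forall_dvd (hirr : IsIrreducibleLND F) {p : A} (hp : p ≠ 0) (hFp : F p = 0)
    (hd : ∀ a, p ∣ F a) : IsUnit p := by
  have hF : F = p • F.divOfDvd hp hd := (Derivation.smul_divOfDvd hp hd).symm
  have hF'p : F.divOfDvd hp hd p = 0 := by
    rw [hF, Derivation.smul_apply, smul_eq_mul] at hFp
    exact (mul_eq_zero.mp hFp).resolve_left hp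
  refine hirr.2.2 p _ (fun a ↦ ?_) hF'p hF
  obtain ⟨n, hn⟩ := hirr.2.1 a
  rw [hF, Derivation.iterate_smul_apply _ hF'p] at hn
  exact ⟨n, (mul_eq_zero.mp hn).resolve_left (pow_ne_zero n hp)⟩

theorem dvd_of_forall_dvd_mul_apply [UniqueFactorizationMonoid A] (hirr : IsIrreducibleLND F)
    {f : A} (hf0 : f ≠ 0) (hf : F f = 0) {g : A} (hfg : ∀ a, f ∣ g * F a) : f ∣ g := by
  have := algebraRat.charZero A
  induction f using UniqueFactorizationMonoid.induction_on_prime generalizing g with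
  | h₁ => exact absurd rfl hf0
  | h₂ u hu => exact hu.dvd
  | h₃ f p hf0' hp ih =>
    have hFp : F p = 0 := hirr.2.1.map_eq_zero_of_map_mul_eq_zero hp.ne_zero hf0' hf
    have hFf : F f = 0 :=
      hirr.2.1.map_eq_zero_of_map_mul_eq_zero hf0' hp.ne_zero (by rwa [mul_comm])
    obtain ⟨g', rfl⟩ : p ∣ g := by
      by_contra hpg
      refine hp.not_isUnit (hirr.isUnit_of_forall_dvd hp.ne_zero hFp fun a ↦ ?_)
      exact (hp.dvd_or_dvd (dvd_of_mul_right_dvd (hfg a))).resolve_left hpg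
    refine mul_dvd_mul_left p (ih hf0' hFf fun a ↦ ?_)
    rw [← mul_dvd_mul_iff_left hp.ne_zero, ← mul_assoc]
    exact hfg a

end IsIrreducibleLND

theorem sat_property_general {A : Type*} [CommRing A] [IsDomain A] [UniqueFactorizationMonoid A]
    [Algebra ℚ A] (B F : Derivation ℚ A A)
    (hB : IsLND ⇑B) (hirr : IsIrreducibleLND F)
    (f : A) (hf0 : f ≠ 0) (hf : F f = 0)
    (hcomm : ∀ a : A, f * F (B a) - B (f * F a) = 0) :
    B f = 0 ∧ ∀ a : A, F (B a) - B (F a) = 0 := by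
  have := algebraRat.charZero A
  have hbracket (a : A) : f * (F (B a) - B (F a)) = B f * F a := by
    have h := hcomm a
    rw [B.leibniz, smul_eq_mul, smul_eq_mul] at h
    linear_combination h
  have hBf : B f = 0 := hB.map_eq_zero_of_dvd <|
    hirr.dvd_of_forall_dvd_mul_apply hf0 hf fun a ↦ ⟨_, (hbracket a).symm⟩
  refine ⟨hBf, fun a ↦ ?_⟩
  have h := hbracket a
  rw [hBf, zero_mul] at h
  exact (mul_eq_zero.mp h).resolve_left hf0

/-- Saturation: if `B`, `F` are nonzero locally nilpotent derivations of a UFD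
containing `ℚ`, `F` is irreducible, `0 ≠ f ∈ ker F`, and `[f F, B] = 0`, then
`B f = 0` and `[F, B] = 0`. -/
theorem sat_property {A : Type*} [CommRing A] [IsDomain A] [UniqueFactorizationMonoid A]
    [Algebra ℚ A] (B F : Derivation ℚ A A) (hB0 : B ≠ 0) (hF0 : F ≠ 0)
    (hB : IsLND ⇑B) (hF : IsLND ⇑F) (hirr : IsIrreducibleLND F)
    (f : A) (hf0 : f ≠ 0) (hf : F f = 0)
    (hcomm : ∀ a : A, f * F (B a) - B (f * F a) = 0) :
    B f = 0 ∧ ∀ a : A, F (B a) - B (F a) = 0 :=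
  sat_property_general B F hB hirr f hf0 hf hcomm
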